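/- Let T be a labeled rooted tree all of whose node labels satisfy a(t) ≥ 0 and b(t) ≥ 0, and suppose the root r of T has at least one child and b(r) > 0. Then for every β > a(r)/b(r) one has Q(T; β) < 0; consequently the Q-critical value satisfies sSup{β ≥ 0 : Q(T; β) = 0} ≤ a(r)/b(r), i.e., β^Q_cr(r) ≤ β_cr(r). -/

import Mathlib

/-- A finitely-branching rooted tree whose every node carries two real labels
`a` and `b` (representing the incremental informations `ΔI_X` and `ΔI_Y`). -/
inductive LTree : Type where
  | node (a b : ℝ) (k : ℕ) (children : Fin k → LTree) : LTree

/-- The Q-function from Q-tree search: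
`Q(T; β) = 0` if the root of `T` has no children, and
`Q(T; β) = min (a(r) − β·b(r) + Σᵢ Q(Tᵢ; β)) 0` if the root `r` of `T` has
child subtrees `T₁, …, T_k` with `k ≥ 1`. -/
noncomputable def Qfun : LTree → ℝ → ℝ
  | .node a b k c, β =>
      if k = 0 then 0 else min (a - β * b + ∑ i : Fin k, Qfun (c i) β) 0

/-- Every node of the tree satisfies the predicate `p` on its label pair. -/
def ForallNodes (p : ℝ → ℝ → Prop) : LTree → Prop
  | .node a b k c => p a b ∧ ∀ i : Fin k, ForallNodes p (c i)

/-- `IsPruning P T` : `P` is a pruning of `T`.  The single-node tree carrying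
the root labels of `T` is a pruning of `T`; and if `T` has root `r` with child
subtrees `T₁, …, T_k` (`k ≥ 1`) and `Pᵢ` is a pruning of `Tᵢ` for each `i`,
then the tree with root `r` and child subtrees `P₁, …, P_k` is a pruning of `T`. -/
inductive IsPruning : LTree → LTree → Prop where
  | root (a b : ℝ) (k : ℕ) (c : Fin k → LTree) (f0 : Fin 0 → LTree) :
      IsPruning (.node a b 0 f0) (.node a b k c)
  | step (a b : ℝ) (k : ℕ) (hk : 0 < k) (c P : Fin k → LTree)
      (h : ∀ i, IsPruning (P i) (c i)) :
      IsPruning (.node a b k P) (.node a b k c)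

/-- `c_β(P)` : the sum of `a(s) − β·b(s)` over the interior nodes `s` of `P`
(nodes with at least one child). -/
noncomputable def cost (β : ℝ) : LTree → ℝ
  | .node a b k c =>
      if k = 0 then 0 else (a - β * b) + ∑ i : Fin k, cost β (c i)

theorem Qfun_nonpos : ∀ (T : LTree) (β : ℝ), Qfun T β ≤ 0
  | .node _ _ k _, β => by
    unfold Qfun
    split_ifs
    exacts [le_rfl, min_le_right _ _]

theorem Qfun_node_le_sub_mul {a b : ℝ} {k : ℕ} (hk : k ≠ 0) (c : Fin k → LTree) (β : ℝ) :
    Qfun (.node a b k c) β ≤ a - β * b := by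
  have hsum : ∑ i, Qfun (c i) β ≤ 0 := Finset.sum_nonpos fun i _ => Qfun_nonpos (c i) β
  rw [Qfun, if_neg hk]
  exact (min_le_left _ _).trans (by linarith)

/-- If all node labels of `T` satisfy `a(t) ≥ 0` and `b(t) ≥ 0`, the root `r`
of `T` has at least one child, and `b(r) > 0`, then `Q(T; β) < 0` for every
`β > a(r)/b(r)`; consequently the Q-critical value
`β^Q_cr(r) = sSup {β ≥ 0 : Q(T; β) = 0}` satisfies
`β^Q_cr(r) ≤ β_cr(r) = a(r)/b(r)`. -/
theorem QCritical_le_one_step_critical (a b : ℝ) (k : ℕ) (hk : 0 < k)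
    (c : Fin k → LTree)
    (hlab : ForallNodes (fun a' b' => 0 ≤ a' ∧ 0 ≤ b') (LTree.node a b k c))
    (hb : 0 < b) :
    (∀ β : ℝ, a / b < β → Qfun (LTree.node a b k c) β < 0) ∧
    sSup {β : ℝ | 0 ≤ β ∧ Qfun (LTree.node a b k c) β = 0} ≤ a / b := by
  have hneg : ∀ β : ℝ, a / b < β → Qfun (LTree.node a b k c) β < 0 := fun β hβ =>
    calc Qfun (LTree.node a b k c) β ≤ a - β * b := Qfun_node_le_sub_mul hk.ne' c β
      _ < 0 := by linarith [(div_lt_iff₀ hb).mp hβ]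
  -- `0 ≤ a / b` covers the empty set, whose `sSup` is the junk value `0`.
  refine ⟨hneg, Real.sSup_le ?_ (div_nonneg hlab.1.1 hb.le)⟩
  rintro β ⟨-, hβ⟩
  by_contra! hlt
  exact (hneg β hlt).ne hβ
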